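/- arXiv:2503.21275 — 4 statements merged into one kernel-verified Lean document; each statement's English description precedes it below -/
import Mathlib

section
/- Let T1 and T2 be random variables on a probability space, and fix t ∈ ℝ with 0 < P(T1 > t)·P(T2 > t) and P(T1 ≤ t)·P(T2 ≤ t) < 1. Define the relative error in the series survival function E_S(t) = [P(T1 > t, T2 > t) − P(T1 > t)P(T2 > t)] / [P(T1 > t)P(T2 > t)] and the relative error in the parallel survival function E_P(t) = [(1 − P(T1 ≤ t, T2 ≤ t)) − (1 − P(T1 ≤ t)P(T2 ≤ t))] / [1 − P(T1 ≤ t)P(T2 ≤ t)]. Then E_S(t) and E_P(t) have opposite signs: E_S(t) ≥ 0 if and only if E_P(t) ≤ 0 (and E_S(t) = 0 if and only if E_P(t) = 0). -/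
open MeasureTheory

/-- the relative errors in the survival functions of the two-component
series and parallel systems at a fixed time `t` have opposite signs. -/
theorem stmt_2 {Ω : Type*} [MeasurableSpace Ω] (P : Measure Ω) [IsProbabilityMeasure P]
    (T₁ T₂ : Ω → ℝ) (hT₁ : Measurable T₁) (hT₂ : Measurable T₂) (t : ℝ)
    (hpos : 0 < (P {ω | T₁ ω > t}).toReal * (P {ω | T₂ ω > t}).toReal)
    (hlt : (P {ω | T₁ ω ≤ t}).toReal * (P {ω | T₂ ω ≤ t}).toReal < 1)
    (ES EP : ℝ)
    (hES : ES = ((P {ω | T₁ ω > t ∧ T₂ ω > t}).toReal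
        - (P {ω | T₁ ω > t}).toReal * (P {ω | T₂ ω > t}).toReal)
        / ((P {ω | T₁ ω > t}).toReal * (P {ω | T₂ ω > t}).toReal))
    (hEP : EP = ((1 - (P {ω | T₁ ω ≤ t ∧ T₂ ω ≤ t}).toReal)
        - (1 - (P {ω | T₁ ω ≤ t}).toReal * (P {ω | T₂ ω ≤ t}).toReal))
        / (1 - (P {ω | T₁ ω ≤ t}).toReal * (P {ω | T₂ ω ≤ t}).toReal)) :
    (0 ≤ ES ↔ EP ≤ 0) ∧ (ES = 0 ↔ EP = 0) := by
  set A : Set Ω := {ω | T₁ ω > t} with hAdef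
  set B : Set Ω := {ω | T₂ ω > t} with hBdef
  have hA : MeasurableSet A := hT₁ measurableSet_Ioi
  have hB : MeasurableSet B := hT₂ measurableSet_Ioi
  have hAc : {ω | T₁ ω ≤ t} = Aᶜ := by ext ω; simp [hAdef, not_lt]
  have hBc : {ω | T₂ ω ≤ t} = Bᶜ := by ext ω; simp [hBdef, not_lt]
  have hcc : {ω : Ω | T₁ ω ≤ t ∧ T₂ ω ≤ t} = (A ∪ B)ᶜ := by
    ext ω; simp [hAdef, hBdef, not_lt, not_or]
  have hab : {ω : Ω | T₁ ω > t ∧ T₂ ω > t} = A ∩ B := rfl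
  set a := (P A).toReal with ha
  set b := (P B).toReal with hb
  set pab := (P (A ∩ B)).toReal with hpab
  -- inclusion–exclusion in real numbers
  have h1 : (P (A ∪ B)).toReal + pab = a + b := by
    have := measure_union_add_inter (μ := P) A hB
    have := congrArg ENNReal.toReal this
    rwa [ENNReal.toReal_add (measure_ne_top _ _) (measure_ne_top _ _),
      ENNReal.toReal_add (measure_ne_top _ _) (measure_ne_top _ _)] at this
  have hcompl : ∀ s : Set Ω, MeasurableSet s → (P sᶜ).toReal = 1 - (P s).toReal := by
    intro s hs
    rw [prob_compl_eq_one_sub hs, ENNReal.toReal_sub_of_le prob_le_one (by simp)]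
    simp
  have h2 : (P (A ∪ B)ᶜ).toReal = 1 - a - b + pab := by
    rw [hcompl _ (hA.union hB)]; linarith
  have hAcval : (P Aᶜ).toReal = 1 - a := hcompl A hA
  have hBcval : (P Bᶜ).toReal = 1 - b := hcompl B hB
  set N := pab - a * b with hN
  have hd : 0 < a * b := hpos
  have hd' : 0 < 1 - (1 - a) * (1 - b) := by
    rw [hAc, hBc, hAcval, hBcval] at hlt; linarith
  have hES' : ES = N / (a * b) := by rw [hES, hab]
  have hEP' : EP = -N / (1 - (1 - a) * (1 - b)) := by
    rw [hEP, hAc, hBc, hcc, hAcval, hBcval, h2]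
    congr 1; ring
  constructor
  · rw [hES', hEP']
    rw [le_div_iff₀ hd, div_le_iff₀ hd']
    constructor <;> intro h <;> nlinarith
  · rw [hES', hEP']
    rw [div_eq_zero_iff, div_eq_zero_iff]
    constructor <;> intro h <;>
      rcases h with h | h <;> first
        | (left; linarith)
        | (exfalso; linarith)
end

section
/- Let β > 0 and γ > 0 and define g(t) = (γ/β)·((e^{βt} − 1)/(e^{γt} − 1)) − 1 for t > 0. If β > γ then g is increasing on (0,∞), and if β < γ then g is decreasing on (0,∞). -/
/-!
Since `γ/β > 0`, only the ratio `r(t) = (e^{βt} - 1)/(e^{γt} - 1)` matters. For `0 < c < b` the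
numerator of `r'` is `b e^{bt}(e^{ct} - 1) - c e^{ct}(e^{bt} - 1)`; divided by `t e^{(b+c)t}` it
compares the slopes `(1 - e^{-bt})/(bt)` and `(1 - e^{-ct})/(ct)` of `exp` on `[-bt, 0]` and
`[-ct, 0]`, which strict convexity of `exp` orders. The case `β < γ` follows by taking reciprocals.
-/

open Real Set

lemma mul_exp_mul_exp_sub_one_lt {b c t : ℝ} (hc : 0 < c) (hcb : c < b) (ht : 0 < t) :
    c * exp (c * t) * (exp (b * t) - 1) < b * exp (b * t) * (exp (c * t) - 1) := by
  have hbt : 0 < b * t := by nlinarith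
  have hct : 0 < c * t := by positivity
  have hslope : (exp (-(b * t)) - exp 0) / (-(b * t) - 0)
      < (exp (-(c * t)) - exp 0) / (-(c * t) - 0) :=
    strictConvexOn_exp.secant_strict_mono (mem_univ 0) (mem_univ _) (mem_univ _)
      (by linarith) (by linarith) (by nlinarith)
  rw [exp_zero, sub_zero, sub_zero, div_neg, div_neg, neg_lt_neg_iff, div_lt_div_iff₀ hct hbt,
    exp_neg, exp_neg] at hslope
  have := mul_lt_mul_of_pos_right hslope (mul_pos (exp_pos (b * t)) (exp_pos (c * t)))
  field_simp at this
  ring_nf at this ⊢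
  linarith

lemma hasDerivAt_exp_sub_one_div_exp_sub_one (β γ : ℝ) {t : ℝ} (ht : γ * t ≠ 0) :
    HasDerivAt (fun s => (exp (β * s) - 1) / (exp (γ * s) - 1))
      ((β * exp (β * t) * (exp (γ * t) - 1) - (exp (β * t) - 1) * (γ * exp (γ * t)))
        / (exp (γ * t) - 1) ^ 2) t := by
  have hexp (a : ℝ) : HasDerivAt (fun s => exp (a * s) - 1) (a * exp (a * t)) t := by
    simpa [mul_comm] using (((hasDerivAt_id t).const_mul a).exp).sub_const 1
  exact (hexp β).div (hexp γ) (sub_ne_zero.mpr fun h => ht (exp_eq_one_iff _ |>.mp h))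

lemma exp_mul_sub_one_pos {a t : ℝ} (ha : 0 < a) (ht : 0 < t) : 0 < exp (a * t) - 1 :=
  sub_pos.mpr (one_lt_exp_iff.mpr (mul_pos ha ht))

section ExpRatio

variable {β γ : ℝ}

lemma strictMonoOn_exp_sub_one_div_exp_sub_one (hγ : 0 < γ) (hγβ : γ < β) :
    StrictMonoOn (fun t => (exp (β * t) - 1) / (exp (γ * t) - 1)) (Ioi 0) := by
  have hderiv (t : ℝ) (ht : 0 < t) := hasDerivAt_exp_sub_one_div_exp_sub_one β γ (t := t) (by positivity)
  refine strictMonoOn_of_hasDerivWithinAt_pos (convex_Ioi 0)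
    (fun t ht => (hderiv t ht).continuousAt.continuousWithinAt)
    (fun t ht => (hderiv t (by simpa using ht)).hasDerivWithinAt) fun t ht => ?_
  rw [interior_Ioi, mem_Ioi] at ht
  have hnum := mul_exp_mul_exp_sub_one_lt hγ hγβ ht
  have hden := exp_mul_sub_one_pos hγ ht
  apply div_pos <;> nlinarith

lemma strictAntiOn_exp_sub_one_div_exp_sub_one (hβ : 0 < β) (hβγ : β < γ) :
    StrictAntiOn (fun t => (exp (β * t) - 1) / (exp (γ * t) - 1)) (Ioi 0) := by
  intro s hs t ht hst
  have hlt := strictMonoOn_exp_sub_one_div_exp_sub_one hβ hβγ hs ht hst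
  have hpos : 0 < (exp (γ * s) - 1) / (exp (β * s) - 1) :=
    div_pos (exp_mul_sub_one_pos (hβ.trans hβγ) hs) (exp_mul_sub_one_pos hβ hs)
  simp only [← inv_div (exp (γ * _) - 1)]
  exact inv_strictAnti₀ hpos hlt

end ExpRatio

/-- `g(t) = (γ/β)((e^{βt}−1)/(e^{γt}−1)) − 1` is increasing on `(0,∞)`
when `β > γ` and decreasing when `β < γ`. -/
theorem stmt_5 (β γ : ℝ) (hβ : 0 < β) (hγ : 0 < γ) :
    (β > γ → StrictMonoOn
        (fun t : ℝ => (γ / β) * ((Real.exp (β * t) - 1) / (Real.exp (γ * t) - 1)) - 1)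
        (Set.Ioi 0)) ∧
    (β < γ → StrictAntiOn
        (fun t : ℝ => (γ / β) * ((Real.exp (β * t) - 1) / (Real.exp (γ * t) - 1)) - 1)
        (Set.Ioi 0)) := by
  refine ⟨fun hgt s hs t ht hst => ?_, fun hlt s hs t ht hst => ?_⟩
  · have := strictMonoOn_exp_sub_one_div_exp_sub_one hγ hgt hs ht hst
    dsimp only at this ⊢
    gcongr
  · have := strictAntiOn_exp_sub_one_div_exp_sub_one hβ hlt hs ht hst
    dsimp only at this ⊢
    gcongr
end

section
/- Let α > 0, β > 0, γ > 0 and define h(t) = (γ/β)·((e^{β t^α} − 1)/(e^{γ t^α} − 1)) − 1 for t > 0. If β > γ then h is increasing on (0,∞), and if β < γ then h is decreasing on (0,∞). -/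
/-! Put `x = t ^ α`. The derivative of `x ↦ (e^{bx} - 1) / (e^{cx} - 1)` has the sign of
`φ(bx) - φ(cx)` with `φ(u) = u e^u / (e^u - 1)`, and `φ` is increasing on `(0, ∞)`; so the ratio
increases for `b > c`, and for `b < c` it is the reciprocal of an increasing positive function. -/

open Real Set

theorem exp_sub_one_pos {u : ℝ} (hu : 0 < u) : 0 < exp u - 1 :=
  sub_pos.2 (one_lt_exp_iff.2 hu)

theorem strictMonoOn_Ioi_of_hasDerivAt_pos {f f' : ℝ → ℝ}
    (hf : ∀ x ∈ Ioi (0 : ℝ), HasDerivAt f (f' x) x) (hf' : ∀ x ∈ Ioi (0 : ℝ), 0 < f' x) :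
    StrictMonoOn f (Ioi 0) := by
  refine strictMonoOn_of_deriv_pos (convex_Ioi 0)
    (fun x hx => (hf x hx).continuousAt.continuousWithinAt) fun x hx => ?_
  rw [interior_Ioi] at hx
  exact (hf x hx).deriv ▸ hf' x hx

theorem strictMonoOn_mul_exp_div_exp_sub_one :
    StrictMonoOn (fun u : ℝ => u * exp u / (exp u - 1)) (Ioi 0) := by
  refine strictMonoOn_Ioi_of_hasDerivAt_pos
    (fun u hu => ((hasDerivAt_id' u).mul (hasDerivAt_exp u)).div
      ((hasDerivAt_exp u).sub_const 1) (exp_sub_one_pos hu).ne') fun u hu => ?_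
  have hlt : u + 1 < exp u := add_one_lt_exp (ne_of_gt hu)
  have hsq : 0 < (exp u - 1) ^ 2 := pow_pos (exp_sub_one_pos hu) 2
  refine div_pos ?_ hsq
  -- the numerator is `exp u * (exp u - 1 - u)`
  dsimp only [Pi.mul_apply]
  nlinarith [exp_pos u]

theorem mul_exp_mul_sub_one_lt {b c x : ℝ} (hc : 0 < c) (hcb : c < b) (hx : 0 < x) :
    c * exp (c * x) * (exp (b * x) - 1) < b * exp (b * x) * (exp (c * x) - 1) := by
  have hcx : 0 < c * x := mul_pos hc hx
  have hbx : 0 < b * x := mul_pos (hc.trans hcb) hx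
  have h := strictMonoOn_mul_exp_div_exp_sub_one hcx hbx (mul_lt_mul_of_pos_right hcb hx)
  dsimp only at h
  rw [div_lt_div_iff₀ (exp_sub_one_pos hcx) (exp_sub_one_pos hbx)] at h
  nlinarith

theorem strictMonoOn_exp_mul_sub_one_div {b c : ℝ} (hc : 0 < c) (hcb : c < b) :
    StrictMonoOn (fun x : ℝ => (exp (b * x) - 1) / (exp (c * x) - 1)) (Ioi 0) := by
  have hexp (a x : ℝ) : HasDerivAt (fun x : ℝ => exp (a * x) - 1) (exp (a * x) * a) x := by
    simpa using ((hasDerivAt_id x).const_mul a).exp.sub_const 1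
  refine strictMonoOn_Ioi_of_hasDerivAt_pos
    (fun x hx => (hexp b x).div (hexp c x) (exp_sub_one_pos (mul_pos hc hx)).ne')
    fun x hx => div_pos ?_ (pow_pos (exp_sub_one_pos (mul_pos hc hx)) 2)
  nlinarith [mul_exp_mul_sub_one_lt hc hcb hx]

theorem strictAntiOn_exp_mul_sub_one_div {b c : ℝ} (hb : 0 < b) (hbc : b < c) :
    StrictAntiOn (fun x : ℝ => (exp (b * x) - 1) / (exp (c * x) - 1)) (Ioi 0) := by
  intro x hx y hy hxy
  have h := strictMonoOn_exp_mul_sub_one_div hb hbc hx hy hxy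
  dsimp only at h ⊢
  rw [← inv_div (exp (c * y) - 1), ← inv_div (exp (c * x) - 1)]
  exact inv_strictAnti₀ (div_pos (exp_sub_one_pos (mul_pos (hb.trans hbc) hx))
    (exp_sub_one_pos (mul_pos hb hx))) h

/-- for `α > 0`, `h(t) = (γ/β)((e^{βt^α}−1)/(e^{γt^α}−1)) − 1` is
increasing on `(0,∞)` when `β > γ` and decreasing when `β < γ`. -/
theorem stmt_9 (α β γ : ℝ) (hα : 0 < α) (hβ : 0 < β) (hγ : 0 < γ) :
    (β > γ → StrictMonoOn
        (fun t : ℝ =>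
          (γ / β) * ((Real.exp (β * t ^ α) - 1) / (Real.exp (γ * t ^ α) - 1)) - 1)
        (Set.Ioi 0)) ∧
    (β < γ → StrictAntiOn
        (fun t : ℝ =>
          (γ / β) * ((Real.exp (β * t ^ α) - 1) / (Real.exp (γ * t ^ α) - 1)) - 1)
        (Set.Ioi 0)) := by
  have hpow : StrictMonoOn (fun t : ℝ => t ^ α) (Ioi 0) :=
    (strictMonoOn_rpow_Ici_of_exponent_pos hα).mono Ioi_subset_Ici_self
  have hmaps : MapsTo (fun t : ℝ => t ^ α) (Ioi 0) (Ioi 0) := fun t ht => rpow_pos_of_pos ht α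
  have haffine : StrictMono (fun y : ℝ => γ / β * y - 1) := fun _ _ hyz =>
    sub_lt_sub_right (mul_lt_mul_of_pos_left hyz (div_pos hγ hβ)) 1
  exact ⟨fun hγβ => haffine.comp_strictMonoOn
      ((strictMonoOn_exp_mul_sub_one_div hγ hγβ).comp hpow hmaps),
    fun hβγ => haffine.comp_strictAntiOn
      ((strictAntiOn_exp_mul_sub_one_div hβ hβγ).comp_strictMonoOn hpow hmaps)⟩
end

section
/- Let λ > c > 0. Then the relative error in the reversed failure rate of a series system under the Marshall–Olkin multivariate exponential model, E^μ(t) = (λ/c)·((e^{ct} − 1)/(e^{λt} − 1)) − 1, is decreasing in t on (0,∞) and satisfies −1 < E^μ(t) < 0 for every t > 0. -/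
/-!
Everything follows from the strict convexity of `exp`: the secant slope `(exp x - 1) / x`
from `0` is strictly increasing on `ℝ \ {0}`. At the points `c t < λ t` this gives
`λ (e^{ct} - 1) < c (e^{λt} - 1)`, i.e. `E^μ(t) < 0`. At the points `-λ t < -c t` it gives,
after clearing `e^{-ct} e^{-λt}`, `c e^{ct} (e^{λt} - 1) < λ e^{λt} (e^{ct} - 1)`, which is
the sign of the numerator of `d/dt E^μ(t)` by the quotient rule.
-/

open Real Set

theorem exp_sub_one_div_lt_exp_sub_one_div {x y : ℝ} (hx : x ≠ 0) (hy : y ≠ 0) (hxy : x < y) :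
    (exp x - 1) / x < (exp y - 1) / y := by
  simpa using strictConvexOn_exp.secant_strict_mono (mem_univ 0) (mem_univ x) (mem_univ y) hx hy hxy

theorem mul_exp_sub_one_lt_mul_exp_sub_one {u v : ℝ} (hu : 0 < u) (huv : u < v) :
    v * (exp u - 1) < u * (exp v - 1) := by
  have h := exp_sub_one_div_lt_exp_sub_one_div hu.ne' (hu.trans huv).ne' huv
  rwa [div_lt_div_iff₀ hu (hu.trans huv), mul_comm, mul_comm (exp v - 1)] at h

theorem mul_exp_mul_exp_sub_one_lt_s16 {u v : ℝ} (hu : 0 < u) (huv : u < v) :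
    u * exp u * (exp v - 1) < v * exp v * (exp u - 1) := by
  have hv : 0 < v := hu.trans huv
  have h := exp_sub_one_div_lt_exp_sub_one_div (neg_ne_zero.2 hv.ne') (neg_ne_zero.2 hu.ne')
    (neg_lt_neg huv)
  rw [← neg_div_neg_eq, ← neg_div_neg_eq (exp (-u) - 1), neg_neg, neg_neg, neg_sub, neg_sub,
    div_lt_div_iff₀ hv hu] at h
  have hexp (w : ℝ) : (1 - exp (-w)) * exp w = exp w - 1 := by
    rw [sub_mul, one_mul, ← exp_add, neg_add_cancel, exp_zero]
  calc u * exp u * (exp v - 1) = (1 - exp (-v)) * u * (exp u * exp v) := by rw [← hexp v]; ring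
    _ < (1 - exp (-u)) * v * (exp u * exp v) := by gcongr
    _ = v * exp v * (exp u - 1) := by rw [← hexp u]; ring

theorem hasDerivAt_exp_mul_sub_one_div (a b x : ℝ) (hx : exp (b * x) - 1 ≠ 0) :
    HasDerivAt (fun t => (exp (a * t) - 1) / (exp (b * t) - 1))
      ((a * exp (a * x) * (exp (b * x) - 1) - (exp (a * x) - 1) * (b * exp (b * x)))
        / (exp (b * x) - 1) ^ 2) x := by
  have hexp (k : ℝ) : HasDerivAt (fun t => exp (k * t) - 1) (k * exp (k * x)) x := by
    simpa [mul_comm] using (((hasDerivAt_id x).const_mul k).exp).sub_const 1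
  exact (hexp a).div (hexp b) hx

/-- for `λ > c > 0`, the relative error in the reversed failure rate
of the Marshall–Olkin multivariate exponential series system,
`E^μ(t) = (λ/c)((e^{ct}−1)/(e^{λt}−1)) − 1`, is decreasing on `(0,∞)` and
satisfies `−1 < E^μ(t) < 0` for every `t > 0`. -/
theorem stmt_16 (lam c : ℝ) (hc : 0 < c) (hcl : c < lam) :
    StrictAntiOn
      (fun t : ℝ => (lam / c) * ((Real.exp (c * t) - 1) / (Real.exp (lam * t) - 1)) - 1)
      (Set.Ioi 0) ∧
    ∀ t : ℝ, 0 < t →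
      -1 < (lam / c) * ((Real.exp (c * t) - 1) / (Real.exp (lam * t) - 1)) - 1 ∧
      (lam / c) * ((Real.exp (c * t) - 1) / (Real.exp (lam * t) - 1)) - 1 < 0 := by
  have hlam : 0 < lam := hc.trans hcl
  have hpos {k t : ℝ} (hk : 0 < k) (ht : 0 < t) : 0 < exp (k * t) - 1 := by
    simpa using one_lt_exp_iff.2 (mul_pos hk ht)
  refine ⟨?_, fun t ht => ⟨?_, ?_⟩⟩
  · have hderiv (x : ℝ) (hx : x ∈ Ioi 0) := ((hasDerivAt_exp_mul_sub_one_div c lam x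
      (hpos hlam hx).ne').const_mul (lam / c)).sub_const 1
    refine strictAntiOn_of_hasDerivWithinAt_neg (convex_Ioi 0)
      (fun x hx => (hderiv x hx).continuousAt.continuousWithinAt)
      (fun x hx => (hderiv x (interior_subset hx)).hasDerivWithinAt) fun x hx => ?_
    rw [interior_Ioi] at hx
    have hscaled := mul_exp_mul_exp_sub_one_lt_s16 (mul_pos hc hx) (mul_lt_mul_of_pos_right hcl hx)
    have hnum :
        c * exp (c * x) * (exp (lam * x) - 1) < (exp (c * x) - 1) * (lam * exp (lam * x)) :=
      (mul_lt_mul_iff_right₀ hx).1 (by linarith)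
    have hden := hpos hlam hx
    exact mul_neg_of_pos_of_neg (by positivity)
      (div_neg_of_neg_of_pos (by linarith) (by positivity))
  · have hnum := hpos hc ht
    have hden := hpos hlam ht
    have : 0 < lam / c * ((exp (c * t) - 1) / (exp (lam * t) - 1)) := by positivity
    linarith
  · have hscaled :=
      mul_exp_sub_one_lt_mul_exp_sub_one (mul_pos hc ht) (mul_lt_mul_of_pos_right hcl ht)
    rw [sub_neg, div_mul_div_comm, div_lt_one (mul_pos hc (hpos hlam ht))]
    exact (mul_lt_mul_iff_right₀ ht).1 (by linarith)
end
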